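/- Let λ₊ and λ₋ be two bounded measured geodesic laminations on ℍ². Then there exists a constant C > 0 such that for every 4-tuple of pairwise distinct points a, b, c, d ∈ ∂∞ℍ² for which the geodesics g(a,b) and g(c,d) are disjoint and the geodesics g(a,c) and g(b,d) are disjoint, one has min{ λ₊(I_{ab} × I_{cd}) + λ₋(I_{ab} × I_{cd}), λ₊(I_{ac} × I_{bd}) + λ₋(I_{ac} × I_{bd}) } ≤ C, where for such an unlinked configuration I_{xy} denotes the closed arc of ∂∞ℍ² from x to y not containing the other two points of the 4-tuple, and I_{xy} × I_{zw} denotes the set of pairs (p,q) with p ∈ I_{xy} and q ∈ I_{zw}. -/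

import Mathlib

/- Upper half-plane model of ℍ², ideal boundary ∂∞ℍ² = OnePoint ℝ,
   geodesics, measured geodesic laminations. -/

noncomputable section
open MeasureTheory Set
open scoped ENNReal

/-- The geodesic of ℍ² with ideal endpoints `p q ∈ ℝ ∪ {∞}`: the Euclidean
semicircle over the real axis with endpoints `p, q` (the vertical half-line
over `p` if `q = ∞`, and vice versa). -/
def geodesic (p q : OnePoint ℝ) : Set UpperHalfPlane :=
  {z | (∃ x y : ℝ, p = (x : OnePoint ℝ) ∧ q = (y : OnePoint ℝ) ∧
          ‖(z : ℂ) - (((x + y) / 2 : ℝ) : ℂ)‖ = |y - x| / 2) ∨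
       (∃ x : ℝ, ((p = (x : OnePoint ℝ) ∧ q = OnePoint.infty) ∨
                  (p = OnePoint.infty ∧ q = (x : OnePoint ℝ))) ∧
          (z : ℂ).re = x)}

/-- `g(p,q)` separates `z` and `w`: both lie off the geodesic, in two
different connected components of its complement. -/
def Separates (p q : OnePoint ℝ) (z w : UpperHalfPlane) : Prop :=
  z ∉ geodesic p q ∧ w ∉ geodesic p q ∧
    connectedComponentIn (geodesic p q)ᶜ z ≠ connectedComponentIn (geodesic p q)ᶜ w

/-- Two pairs of ideal endpoints are unlinked: the corresponding geodesics do not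
cross, i.e. they are equal or disjoint. -/
def Unlinked (p q p' q' : OnePoint ℝ) : Prop :=
  geodesic p q = geodesic p' q' ∨ geodesic p q ∩ geodesic p' q' = ∅

instance : MeasurableSpace (OnePoint ℝ) := borel _

/-- Topological support of a measure. -/
def mSupport (μ : Measure (OnePoint ℝ × OnePoint ℝ)) : Set (OnePoint ℝ × OnePoint ℝ) :=
  {x | ∀ U : Set (OnePoint ℝ × OnePoint ℝ), IsOpen U → x ∈ U → 0 < μ U}

/-- A measured geodesic lamination on ℍ², encoded as a Borel measure on pairs of
distinct ideal endpoints: it gives no mass to the diagonal, is locally finite off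
the diagonal, is invariant under swapping endpoints, and any two pairs in its
support are unlinked. -/
structure MeasuredLamination where
  μ : Measure (OnePoint ℝ × OnePoint ℝ)
  diag_null : μ {x | x.1 = x.2} = 0
  locFin : ∀ x : OnePoint ℝ × OnePoint ℝ, x.1 ≠ x.2 →
    ∃ U : Set (OnePoint ℝ × OnePoint ℝ), IsOpen U ∧ x ∈ U ∧ μ U < ⊤
  symm : μ.map Prod.swap = μ
  unlinked : ∀ x ∈ mSupport μ, ∀ y ∈ mSupport μ, x.1 ≠ x.2 → y.1 ≠ y.2 →
    Unlinked x.1 x.2 y.1 y.2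

/-- Intersection number `i([z,w], λ)` of a lamination with the geodesic segment
`[z,w]`: the mass of the set of leaves separating `z` from `w`. -/
def interNum (L : MeasuredLamination) (z w : UpperHalfPlane) : ℝ≥0∞ :=
  L.μ {pq : OnePoint ℝ × OnePoint ℝ | Separates pq.1 pq.2 z w}

/-- A measured geodesic lamination is bounded if geodesic segments of length at
most 1 have uniformly bounded intersection with it. -/
def MeasuredLamination.Bounded (L : MeasuredLamination) : Prop :=
  ∃ C : ℝ, 0 < C ∧ ∀ z w : UpperHalfPlane, dist z w ≤ 1 →
    interNum L z w ≤ ENNReal.ofReal C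

/-- Two measured geodesic laminations strongly fill if long geodesic segments
have large total intersection with them. -/
def StronglyFill (L M : MeasuredLamination) : Prop :=
  ∀ ε : ℝ, 0 < ε → ∃ c : ℝ, 0 < c ∧ ∀ z w : UpperHalfPlane, c ≤ dist z w →
    ENNReal.ofReal ε ≤ interNum L z w + interNum M z w

/-- The Cayley transform `∂∞ℍ² → S¹ ⊆ ℂ`, `x ↦ (x−i)/(x+i)`, `∞ ↦ 1`. -/
def cayley (x : OnePoint ℝ) : ℂ :=
  OnePoint.rec 1 (fun a : ℝ => ((a : ℂ) - Complex.I) / ((a : ℂ) + Complex.I)) x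

/-- The visual metric on `∂∞ℍ²` viewed from `i`. -/
def dVis (x y : OnePoint ℝ) : ℝ := ‖cayley x - cayley y‖

/-- The closed arc of `∂∞ℍ² = ℝ ∪ {∞}` from `x` to `y` in the counterclockwise
(increasing) direction, wrapping through `∞`. -/
def arcCcw (x y : OnePoint ℝ) : Set (OnePoint ℝ) :=
  {z | ∃ a b c : ℝ, x = (a : OnePoint ℝ) ∧ y = (b : OnePoint ℝ) ∧ z = (c : OnePoint ℝ) ∧
        ((a ≤ b ∧ a ≤ c ∧ c ≤ b) ∨ (b < a ∧ (a ≤ c ∨ c ≤ b)))} ∪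
  {z | z = OnePoint.infty ∧
        (x = OnePoint.infty ∨ y = OnePoint.infty ∨
         ∃ a b : ℝ, x = (a : OnePoint ℝ) ∧ y = (b : OnePoint ℝ) ∧ b < a)} ∪
  {z | ∃ a c : ℝ, x = (a : OnePoint ℝ) ∧ y = OnePoint.infty ∧ z = (c : OnePoint ℝ) ∧ a ≤ c} ∪
  {z | ∃ b c : ℝ, x = OnePoint.infty ∧ y = (b : OnePoint ℝ) ∧ z = (c : OnePoint ℝ) ∧ c ≤ b}

/-- `A` is the closed arc of `∂∞ℍ²` with endpoints `x, y` that avoids the two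
points `u, v`. -/
def IsArcAvoiding (x y u v : OnePoint ℝ) (A : Set (OnePoint ℝ)) : Prop :=
  (A = arcCcw x y ∨ A = arcCcw y x) ∧ u ∉ A ∧ v ∉ A

/-! Cutting the circle `ℝ ∪ {∞}` at `∞`, the hypotheses say that the vertices of the ideal
quadrilateral are, in cyclic order, `x₁ < x₂ < x₃ < x₄ ≤ ∞` with `a` and `d` opposite. If an arc
`[s, t]` is followed by a gap at least as long, every leaf from `[s, t]` to beyond the gap crosses
one horizontal segment over `[s, t]`, of hyperbolic length at most `8`. Comparing the lengths of
`[x₁, x₂]`, `[x₂, x₃]`, `[x₃, x₄]` provides such a segment for one of the two pairs of opposite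
sides. A lamination of mass at most `C` on unit segments has mass at most `2 n C` on the leaves
crossing a chain of `n` unit steps: such a leaf crosses a step or passes through a vertex, and the
leaves through a point coincide, hence all cross a common unit segment. -/

open UpperHalfPlane

/-- `ℝ ∪ {∞}` ordered as `WithTop ℝ`: the circle cut open at `∞`. Closed arcs become intervals
or complements of intervals, and the cyclic order of the circle is the cyclic order of this
linear order. -/
instance : LinearOrder (OnePoint ℝ) := inferInstanceAs (LinearOrder (WithTop ℝ))

namespace OnePoint

@[simp] theorem coe_le_coe {x y : ℝ} : (x : OnePoint ℝ) ≤ y ↔ x ≤ y := WithTop.coe_le_coe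
@[simp] theorem coe_lt_coe {x y : ℝ} : (x : OnePoint ℝ) < y ↔ x < y := WithTop.coe_lt_coe
@[simp] theorem le_infty (p : OnePoint ℝ) : p ≤ OnePoint.infty := le_top (α := WithTop ℝ)
@[simp] theorem coe_lt_infty (x : ℝ) : (x : OnePoint ℝ) < OnePoint.infty := WithTop.coe_lt_top x
@[simp] theorem not_infty_lt (p : OnePoint ℝ) : ¬OnePoint.infty < p := not_lt.mpr (le_infty p)
@[simp] theorem infty_le_iff {p : OnePoint ℝ} : OnePoint.infty ≤ p ↔ p = OnePoint.infty :=
  top_le_iff (α := WithTop ℝ)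

theorem exists_coe_of_lt {p q : OnePoint ℝ} (h : p < q) : ∃ x : ℝ, p = x := by
  induction p using OnePoint.rec with
  | infty => simp at h
  | coe x => exact ⟨x, rfl⟩

end OnePoint

theorem mem_arcCcw_iff {x y z : OnePoint ℝ} :
    z ∈ arcCcw x y ↔ (x ≤ y ∧ x ≤ z ∧ z ≤ y) ∨ (y < x ∧ (x ≤ z ∨ z ≤ y)) := by
  induction x using OnePoint.rec <;> induction y using OnePoint.rec <;>
    induction z using OnePoint.rec <;> simp [arcCcw]

theorem arcCcw_of_le {x y : OnePoint ℝ} (h : x ≤ y) : arcCcw x y = Set.Icc x y := by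
  ext z
  simp [mem_arcCcw_iff, h, not_lt.mpr h]

theorem arcCcw_of_lt {x y : OnePoint ℝ} (h : y < x) : arcCcw x y = (Set.Ioo y x)ᶜ := by
  ext z
  simp only [mem_arcCcw_iff, h, not_le.mpr h, true_and, false_and, false_or, Set.mem_compl_iff,
    Set.mem_Ioo, not_and_or, not_lt]
  exact or_comm

theorem eq_arcCcw_of_mem_arcCcw {x y w : OnePoint ℝ} {A : Set (OnePoint ℝ)}
    (hA : A = arcCcw x y ∨ A = arcCcw y x) (hwA : w ∉ A) (hw : w ∈ arcCcw y x) :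
    A = arcCcw x y :=
  hA.resolve_right fun h => hwA (h ▸ hw)

section CyclicallySorted

variable {α : Type*} [LinearOrder α]

def CyclicallySorted (a b c d : α) : Prop :=
  (a < b ∧ b < c ∧ c < d) ∨ (b < c ∧ c < d ∧ d < a) ∨ (c < d ∧ d < a ∧ a < b) ∨
    (d < a ∧ a < b ∧ b < c)

theorem CyclicallySorted.rotate {a b c d : α} (h : CyclicallySorted a b c d) :
    CyclicallySorted b c d a := by
  unfold CyclicallySorted at *
  tauto

theorem cyclicallySorted_cases {a b c d : α} (hab : a ≠ b) (hac : a ≠ c) (had : a ≠ d)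
    (hbc : b ≠ c) (hbd : b ≠ d) (hcd : c ≠ d) :
    CyclicallySorted a b c d ∨ CyclicallySorted a b d c ∨ CyclicallySorted a c b d ∨
      CyclicallySorted a c d b ∨ CyclicallySorted a d b c ∨ CyclicallySorted a d c b := by
  unfold CyclicallySorted
  rcases hab.lt_or_gt with h₁ | h₁ <;> rcases hac.lt_or_gt with h₂ | h₂ <;>
    rcases had.lt_or_gt with h₃ | h₃ <;> rcases hbc.lt_or_gt with h₄ | h₄ <;>
    rcases hbd.lt_or_gt with h₅ | h₅ <;> rcases hcd.lt_or_gt with h₆ | h₆ <;>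
    first
    | (exfalso; order)
    | simp [h₁, h₂, h₃, h₄, h₅, h₆, lt_asymm h₁, lt_asymm h₂, lt_asymm h₃, lt_asymm h₄,
        lt_asymm h₅, lt_asymm h₆]

end CyclicallySorted

theorem geodesic_comm (p q : OnePoint ℝ) : geodesic p q = geodesic q p := by
  ext z
  constructor <;>
  · rintro (⟨x, y, rfl, rfl, h⟩ | ⟨x, (⟨rfl, rfl⟩ | ⟨rfl, rfl⟩), h⟩)
    · exact Or.inl ⟨y, x, rfl, rfl, by rwa [add_comm y x, abs_sub_comm]⟩
    · exact Or.inr ⟨x, Or.inr ⟨rfl, rfl⟩, h⟩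
    · exact Or.inr ⟨x, Or.inl ⟨rfl, rfl⟩, h⟩

/-- `(z.re - u) * (v - z.re)` is the power of `z.re` with respect to the circle over `[u, v]`:
`z` is inside the half-disc iff `z.im ^ 2` is smaller. -/
theorem mem_geodesic_coe_coe {u v : ℝ} {z : ℍ} :
    z ∈ geodesic u v ↔ z.im ^ 2 = (z.re - u) * (v - z.re) := by
  have hsq : ‖(z : ℂ) - (((u + v) / 2 : ℝ) : ℂ)‖ ^ 2 = (z.re - (u + v) / 2) ^ 2 + z.im ^ 2 := by
    rw [Complex.sq_norm, Complex.normSq_apply]; simp; ring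
  simp only [geodesic, OnePoint.coe_eq_coe, OnePoint.coe_ne_infty, exists_and_left,
    exists_eq_left', Set.mem_ofPred_eq, false_and, and_false, or_false, exists_false]
  rw [← sq_eq_sq₀ (norm_nonneg _) (by positivity), hsq, div_pow, sq_abs]
  constructor <;> intro h <;> linarith

theorem mem_geodesic_coe_infty {u : ℝ} {z : ℍ} :
    z ∈ geodesic u OnePoint.infty ↔ z.re = u := by
  simp [geodesic, eq_comm]

theorem ne_of_mem_geodesic {p q : OnePoint ℝ} {z : ℍ} (h : z ∈ geodesic p q) : p ≠ q := by
  rintro rfl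
  induction p using OnePoint.rec with
  | infty => simp [geodesic] at h
  | coe u =>
    rw [mem_geodesic_coe_coe] at h
    nlinarith [z.im_pos, sq_nonneg (z.re - u)]

theorem not_disjoint_geodesic_coe {x₁ x₂ x₃ x₄ : ℝ} (h₁₂ : x₁ < x₂) (h₂₃ : x₂ < x₃)
    (h₃₄ : x₃ < x₄) : ¬Disjoint (geodesic x₁ x₃) (geodesic x₂ x₄) := by
  have hD : 0 < (x₂ - x₁) + (x₄ - x₃) := by linarith
  -- the difference of the powers of `t` with respect to the two circles is affine in `t`
  have hpow : ∀ t : ℝ, (t - x₁) * (x₃ - t) - (t - x₂) * (x₄ - t) =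
      (x₂ - x₁) * (x₃ - x₂) - ((x₂ - x₁) + (x₄ - x₃)) * (t - x₂) := fun t => by ring
  obtain ⟨X, hX⟩ : ∃ X, ((x₂ - x₁) + (x₄ - x₃)) * (X - x₂) = (x₂ - x₁) * (x₃ - x₂) :=
    ⟨x₂ + (x₂ - x₁) * (x₃ - x₂) / ((x₂ - x₁) + (x₄ - x₃)), by field_simp; ring⟩
  have hX₂ : x₂ < X := by nlinarith
  have hX₃ : X < x₃ := by nlinarith
  have hpos : 0 < (X - x₁) * (x₃ - X) := mul_pos (by linarith) (by linarith)
  have hY := Real.sq_sqrt hpos.le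
  refine Set.not_disjoint_iff.mpr ⟨.mk ⟨X, √((X - x₁) * (x₃ - X))⟩ (Real.sqrt_pos.mpr hpos),
    ?_, ?_⟩
  · rw [mem_geodesic_coe_coe]; exact hY
  · rw [mem_geodesic_coe_coe]
    simp only [mk_re, mk_im, hY]
    linarith [hpow X]

theorem not_disjoint_geodesic_coe_infty {x₁ x₂ x₃ : ℝ} (h₁₂ : x₁ < x₂) (h₂₃ : x₂ < x₃) :
    ¬Disjoint (geodesic x₁ x₃) (geodesic x₂ OnePoint.infty) := by
  have hpos : 0 < (x₂ - x₁) * (x₃ - x₂) := mul_pos (by linarith) (by linarith)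
  refine Set.not_disjoint_iff.mpr ⟨.mk ⟨x₂, √((x₂ - x₁) * (x₃ - x₂))⟩ (Real.sqrt_pos.mpr hpos),
    ?_, ?_⟩
  · rw [mem_geodesic_coe_coe]; exact Real.sq_sqrt hpos.le
  · rw [mem_geodesic_coe_infty]; rfl

theorem not_disjoint_geodesic_of_lt {a b c d : OnePoint ℝ} (hab : a < b) (hbc : b < c)
    (hcd : c < d) : ¬Disjoint (geodesic a c) (geodesic b d) := by
  obtain ⟨x₁, rfl⟩ := OnePoint.exists_coe_of_lt hab
  obtain ⟨x₂, rfl⟩ := OnePoint.exists_coe_of_lt hbc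
  obtain ⟨x₃, rfl⟩ := OnePoint.exists_coe_of_lt hcd
  simp only [OnePoint.coe_lt_coe] at hab hbc
  induction d using OnePoint.rec with
  | infty => exact not_disjoint_geodesic_coe_infty hab hbc
  | coe x₄ => exact not_disjoint_geodesic_coe hab hbc (OnePoint.coe_lt_coe.mp hcd)

theorem separates_of_isOpen {p q : OnePoint ℝ} {z w : ℍ} {U V : Set ℍ} (hU : IsOpen U)
    (hV : IsOpen V) (hUV : Disjoint U V) (hcompl : (geodesic p q)ᶜ = U ∪ V) (hz : z ∈ U)
    (hw : w ∈ V) : Separates p q z w := by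
  have hzG : z ∈ (geodesic p q)ᶜ := hcompl ▸ Or.inl hz
  have hwG : w ∈ (geodesic p q)ᶜ := hcompl ▸ Or.inr hw
  refine ⟨hzG, hwG, fun h => hUV.notMem_of_mem_left ?_ hw⟩
  have hsub : connectedComponentIn (geodesic p q)ᶜ z ⊆ U :=
    isPreconnected_connectedComponentIn.subset_left_of_subset_union hU hV hUV
      (hcompl ▸ connectedComponentIn_subset _ _) ⟨z, mem_connectedComponentIn hzG, hz⟩
  exact hsub (h ▸ mem_connectedComponentIn hwG)

theorem separates_coe_coe {u v : ℝ} {z w : ℍ} (hz : z.im ^ 2 < (z.re - u) * (v - z.re))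
    (hw : (w.re - u) * (v - w.re) < w.im ^ 2) : Separates u v z w := by
  refine separates_of_isOpen (U := {ζ | ζ.im ^ 2 < (ζ.re - u) * (v - ζ.re)})
    (V := {ζ | (ζ.re - u) * (v - ζ.re) < ζ.im ^ 2}) (isOpen_lt (by fun_prop) (by fun_prop))
    (isOpen_lt (by fun_prop) (by fun_prop)) ?_ ?_ hz hw
  · exact Set.disjoint_left.mpr fun _ => lt_asymm (α := ℝ)
  · ext ζ
    simp [mem_geodesic_coe_coe, lt_or_lt_iff_ne]

theorem separates_coe_infty {u : ℝ} {z w : ℍ} (hz : z.re < u) (hw : u < w.re) :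
    Separates u OnePoint.infty z w := by
  refine separates_of_isOpen (U := {ζ | ζ.re < u}) (V := {ζ | u < ζ.re})
    (isOpen_lt (by fun_prop) (by fun_prop)) (isOpen_lt (by fun_prop) (by fun_prop)) ?_ ?_ hz hw
  · exact Set.disjoint_left.mpr fun _ => lt_asymm (α := ℝ)
  · ext ζ
    simp [mem_geodesic_coe_infty, lt_or_lt_iff_ne, eq_comm]

theorem Separates.symm {p q : OnePoint ℝ} {z w : ℍ} (h : Separates p q z w) :
    Separates p q w z :=
  ⟨h.2.1, h.1, h.2.2.symm⟩

theorem separates_comm {p q : OnePoint ℝ} {z w : ℍ} :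
    Separates p q z w ↔ Separates q p z w := by
  rw [Separates, Separates, geodesic_comm]

theorem Separates.of_geodesic_eq {p q p' q' : OnePoint ℝ} {z w : ℍ} (h : Separates p q z w)
    (hg : geodesic p q = geodesic p' q') : Separates p' q' z w := by
  rwa [Separates, ← hg]

theorem Separates.exists_step {p q : OnePoint ℝ} (f : ℕ → ℍ) {n : ℕ}
    (h : Separates p q (f 0) (f n)) :
    ∃ j < n, Separates p q (f j) (f (j + 1)) ∨ f j ∈ geodesic p q := by
  induction n with
  | zero => exact absurd rfl h.2.2
  | succ n ih =>
    by_cases hn : f n ∈ geodesic p q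
    · exact ⟨n, n.lt_succ_self, Or.inr hn⟩
    by_cases hc : connectedComponentIn (geodesic p q)ᶜ (f 0) =
        connectedComponentIn (geodesic p q)ᶜ (f n)
    · exact ⟨n, n.lt_succ_self, Or.inl ⟨hn, h.2.1, hc ▸ h.2.2⟩⟩
    · obtain ⟨j, hj, hstep⟩ := ih ⟨h.1, hn, hc⟩
      exact ⟨j, hj.trans n.lt_succ_self, hstep⟩

theorem dist_mk_le_one {x x' y : ℝ} (hy : 0 < y) (h : |x - x'| ≤ y) :
    dist (mk ⟨x, y⟩ hy) (mk ⟨x', y⟩ hy) ≤ 1 := by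
  have hcoe : dist ((mk ⟨x, y⟩ hy : ℍ) : ℂ) (mk ⟨x', y⟩ hy) = |x - x'| := by
    rw [Complex.dist_eq, coe_mk, coe_mk, ← Real.norm_eq_abs, ← Complex.norm_real]
    congr 1
    apply Complex.ext <;> simp
  have hhalf : |x - x'| / (2 * √(y * y)) ≤ Real.sinh (1 / 2) := by
    rw [Real.sqrt_mul_self hy.le, div_le_iff₀ (by positivity)]
    nlinarith [Real.self_le_sinh_iff.mpr (by norm_num : (0 : ℝ) ≤ 1 / 2)]
  have hhalf' := Real.arsinh_le_arsinh.mpr hhalf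
  rw [Real.arsinh_sinh] at hhalf'
  rw [UpperHalfPlane.dist_eq, hcoe]
  change 2 * Real.arsinh (|x - x'| / (2 * √(y * y))) ≤ 1
  linarith

theorem exists_separates_dist_le_one_of_coe_lt {u : ℝ} {q : OnePoint ℝ}
    (huq : (u : OnePoint ℝ) < q) : ∃ z w : ℍ, dist z w ≤ 1 ∧ Separates u q z w := by
  induction q using OnePoint.rec with
  | infty =>
    refine ⟨mk ⟨u - 1 / 2, 1⟩ one_pos, mk ⟨u + 1 / 2, 1⟩ one_pos,
      dist_mk_le_one one_pos ?_, separates_coe_infty ?_ ?_⟩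
    · rw [abs_le]; constructor <;> linarith
    all_goals simp
  | coe v =>
    have hy : 0 < (v - u) / 4 := by simp at huq; linarith
    refine ⟨mk ⟨u - (v - u) / 8, (v - u) / 4⟩ hy, mk ⟨u + (v - u) / 8, (v - u) / 4⟩ hy,
      dist_mk_le_one hy ?_, (separates_coe_coe ?_ ?_).symm⟩
    · rw [abs_le]; constructor <;> linarith
    · simp; nlinarith
    · simp; nlinarith

theorem exists_separates_dist_le_one {p q : OnePoint ℝ} (hpq : p ≠ q) :
    ∃ z w : ℍ, dist z w ≤ 1 ∧ Separates p q z w := by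
  rcases hpq.lt_or_gt with h | h
  · induction p using OnePoint.rec with
    | infty => simp at h
    | coe u => exact exists_separates_dist_le_one_of_coe_lt h
  · induction q using OnePoint.rec with
    | infty => simp at h
    | coe v =>
      obtain ⟨z, w, hzw, hsep⟩ := exists_separates_dist_le_one_of_coe_lt h
      exact ⟨z, w, hzw, separates_comm.mpr hsep⟩
instance : SecondCountableTopology (OnePoint ℝ) :=
  (onePointEquivSphereOfFinrankEq (ι := Fin 2) (V := ℝ) (by simp)).secondCountableTopology

theorem mSupport_eq_support (μ : Measure (OnePoint ℝ × OnePoint ℝ)) :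
    mSupport μ = μ.support := by
  ext x
  simp only [mSupport, Measure.support_eq_forall_isOpen, Set.mem_ofPred_eq]
  exact forall_congr' fun _ => imp.swap

theorem measure_le_of_inter_mSupport_subset {μ : Measure (OnePoint ℝ × OnePoint ℝ)}
    {s t : Set (OnePoint ℝ × OnePoint ℝ)} (h : s ∩ mSupport μ ⊆ t) : μ s ≤ μ t :=
  measure_mono_ae <| Filter.mem_of_superset Measure.support_mem_ae fun _ hx hs =>
    h ⟨hs, (mSupport_eq_support μ).symm ▸ hx⟩

namespace MeasuredLamination

variable (L : MeasuredLamination) {C : ℝ≥0∞}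

/-- Leaves through a point all coincide, so they are crossed by one short segment. -/
theorem measure_mem_geodesic_le (hC : ∀ z w, dist z w ≤ 1 → interNum L z w ≤ C) (ζ : ℍ) :
    L.μ {pq | ζ ∈ geodesic pq.1 pq.2} ≤ C := by
  rcases ({pq : OnePoint ℝ × OnePoint ℝ | ζ ∈ geodesic pq.1 pq.2} ∩
    mSupport L.μ).eq_empty_or_nonempty with h | ⟨pq₀, hζ₀, hpq₀⟩
  · exact (measure_le_of_inter_mSupport_subset h.subset).trans (by simp)
  obtain ⟨z, w, hzw, hsep⟩ := exists_separates_dist_le_one (ne_of_mem_geodesic hζ₀)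
  refine (measure_le_of_inter_mSupport_subset fun pq ⟨hζ, hpq⟩ => ?_).trans (hC z w hzw)
  rcases L.unlinked pq₀ hpq₀ pq hpq (ne_of_mem_geodesic hζ₀) (ne_of_mem_geodesic hζ) with
    heq | hdisj
  · exact hsep.of_geodesic_eq heq
  · exact absurd hdisj (Set.nonempty_iff_ne_empty.mp ⟨ζ, hζ₀, hζ⟩)

theorem measure_separates_le_of_chain (hC : ∀ z w, dist z w ≤ 1 → interNum L z w ≤ C)
    (f : ℕ → ℍ) (n : ℕ) (hf : ∀ j < n, dist (f j) (f (j + 1)) ≤ 1) :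
    L.μ {pq | Separates pq.1 pq.2 (f 0) (f n)} ≤ 2 * n * C := by
  have hsub : {pq : OnePoint ℝ × OnePoint ℝ | Separates pq.1 pq.2 (f 0) (f n)} ⊆
      ⋃ j ∈ Finset.range n, ({pq | Separates pq.1 pq.2 (f j) (f (j + 1))} ∪
        {pq | f j ∈ geodesic pq.1 pq.2}) := fun pq hpq => by
    obtain ⟨j, hj, hstep⟩ := hpq.exists_step f
    exact Set.mem_biUnion (Finset.mem_range.mpr hj) hstep
  calc L.μ {pq | Separates pq.1 pq.2 (f 0) (f n)}
      ≤ ∑ j ∈ Finset.range n, (L.μ {pq | Separates pq.1 pq.2 (f j) (f (j + 1))} +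
          L.μ {pq | f j ∈ geodesic pq.1 pq.2}) :=
        (measure_mono hsub).trans <| (measure_biUnion_finset_le _ _).trans <|
          Finset.sum_le_sum fun _ _ => measure_union_le _ _
    _ ≤ ∑ _j ∈ Finset.range n, (C + C) := Finset.sum_le_sum fun j hj =>
        add_le_add (hC _ _ (hf j (Finset.mem_range.mp hj))) (L.measure_mem_geodesic_le hC _)
    _ = 2 * n * C := by simp [two_mul, add_mul]

end MeasuredLamination

/-- Every leaf from `S` to `T` crosses a horizontal segment of hyperbolic length at most `8`. -/
def ShortTransversal (S T : Set (OnePoint ℝ)) : Prop :=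
  ∃ (x y : ℝ) (hy : 0 < y), ∀ p ∈ S, ∀ q ∈ T,
    Separates p q (mk ⟨x, y⟩ hy) (mk ⟨x + 8 * y, y⟩ hy)

namespace ShortTransversal

variable {S T S' T' : Set (OnePoint ℝ)}

theorem mono (h : ShortTransversal S T) (hS : S' ⊆ S) (hT : T' ⊆ T) :
    ShortTransversal S' T' :=
  let ⟨x, y, hy, hsep⟩ := h
  ⟨x, y, hy, fun p hp q hq => hsep p (hS hp) q (hT hq)⟩

theorem symm (h : ShortTransversal S T) : ShortTransversal T S :=
  let ⟨x, y, hy, hsep⟩ := h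
  ⟨x, y, hy, fun p hp q hq => separates_comm.mp (hsep q hq p hp)⟩

theorem measure_prod_le (h : ShortTransversal S T) (L : MeasuredLamination) {C : ℝ≥0∞}
    (hC : ∀ z w, dist z w ≤ 1 → interNum L z w ≤ C) : L.μ (S ×ˢ T) ≤ 16 * C := by
  obtain ⟨x, y, hy, hsep⟩ := h
  set f : ℕ → ℍ := fun j => mk ⟨x + j * y, y⟩ hy
  have hf : ∀ j < 8, dist (f j) (f (j + 1)) ≤ 1 := fun j _ =>
    dist_mk_le_one hy (by push_cast; rw [show x + j * y - (x + (j + 1) * y) = -y by ring,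
      abs_neg, abs_of_pos hy])
  calc L.μ (S ×ˢ T) ≤ L.μ {pq | Separates pq.1 pq.2 (f 0) (f 8)} :=
        measure_mono fun pq ⟨hp, hq⟩ => by simpa [f] using hsep pq.1 hp pq.2 hq
    _ ≤ 2 * (8 : ℕ) * C := L.measure_separates_le_of_chain hC f 8 hf
    _ = 16 * C := by norm_num

end ShortTransversal

/-- The segment from `(3a - b) / 2` to `(3b - a) / 2` at height `(b - a) / 4` starts left of
`[a, b]` and ends inside the half-disc over `[p, q]` whenever `p ≤ b` and `2b - a ≤ q`;
symmetrically on the other side. -/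
theorem shortTransversal_Icc_compl_Ioo {a b : ℝ} (hab : a < b) :
    ShortTransversal (Set.Icc (a : OnePoint ℝ) b)
      (Set.Ioo ((2 * a - b : ℝ) : OnePoint ℝ) (2 * b - a : ℝ))ᶜ := by
  refine ⟨(3 * a - b) / 2, (b - a) / 4, by linarith, fun p ⟨hap, hpb⟩ q hq => ?_⟩
  induction p using OnePoint.rec with
  | infty => simp at hpb
  | coe s =>
  simp only [OnePoint.coe_le_coe] at hap hpb
  induction q using OnePoint.rec with
  | infty => exact separates_coe_infty (by simp; linarith) (by simp; linarith)
  | coe t =>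
  simp only [Set.mem_compl_iff, Set.mem_Ioo, OnePoint.coe_lt_coe, not_and_or, not_lt] at hq
  rcases hq with ht | ht
  · refine separates_coe_coe ?_ ?_ <;> simp <;> nlinarith
  · refine (separates_coe_coe ?_ ?_).symm <;> simp <;> nlinarith

theorem shortTransversal_of_lt {a b c d : OnePoint ℝ} (hab : a < b) (hbc : b < c) (hcd : c < d) :
    ShortTransversal (arcCcw a b) (arcCcw c d) ∨ ShortTransversal (arcCcw b c) (arcCcw d a) := by
  obtain ⟨x₁, rfl⟩ := OnePoint.exists_coe_of_lt hab
  obtain ⟨x₂, rfl⟩ := OnePoint.exists_coe_of_lt hbc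
  obtain ⟨x₃, rfl⟩ := OnePoint.exists_coe_of_lt hcd
  rw [arcCcw_of_le hab.le, arcCcw_of_le hbc.le, arcCcw_of_le hcd.le,
    arcCcw_of_lt ((hab.trans hbc).trans hcd)]
  simp only [OnePoint.coe_lt_coe] at hab hbc
  by_cases hleft : x₂ - x₁ ≤ x₃ - x₂
  · refine Or.inl ((shortTransversal_Icc_compl_Ioo hab).mono le_rfl fun z hz hz' => ?_)
    exact (not_lt.mpr ((OnePoint.coe_le_coe.mpr (by linarith)).trans hz.1)) hz'.2
  by_cases hright : ((2 * x₃ - x₂ : ℝ) : OnePoint ℝ) ≤ d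
  · refine Or.inr ((shortTransversal_Icc_compl_Ioo hbc).mono le_rfl
      (Set.compl_subset_compl.mpr (Set.Ioo_subset_Ioo ?_ hright)))
    exact OnePoint.coe_le_coe.mpr (by linarith)
  obtain ⟨x₄, rfl⟩ := OnePoint.exists_coe_of_lt (not_le.mp hright)
  simp only [OnePoint.coe_le_coe, OnePoint.coe_lt_coe, not_le] at hright hcd
  refine Or.inl ((shortTransversal_Icc_compl_Ioo hcd).symm.mono (fun z hz hz' => ?_) le_rfl)
  exact (not_lt.mpr (hz.2.trans (OnePoint.coe_le_coe.mpr (by linarith)))) hz'.1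

namespace CyclicallySorted

variable {a b c d : OnePoint ℝ}

theorem mem_arcCcw (h : CyclicallySorted a b c d) : b ∈ arcCcw a d := by
  rw [mem_arcCcw_iff]
  rcases h with ⟨h₁, h₂, h₃⟩ | ⟨h₁, h₂, h₃⟩ | ⟨h₁, h₂, h₃⟩ | ⟨h₁, h₂, h₃⟩
  · exact Or.inl ⟨(h₁.trans (h₂.trans h₃)).le, h₁.le, (h₂.trans h₃).le⟩
  · exact Or.inr ⟨h₃, Or.inr (h₁.trans h₂).le⟩
  · exact Or.inr ⟨h₂, Or.inl h₃.le⟩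
  · exact Or.inr ⟨h₁, Or.inl h₂.le⟩

theorem not_disjoint_geodesic (h : CyclicallySorted a b c d) :
    ¬Disjoint (geodesic a c) (geodesic b d) := by
  rcases h with ⟨h₁, h₂, h₃⟩ | ⟨h₁, h₂, h₃⟩ | ⟨h₁, h₂, h₃⟩ | ⟨h₁, h₂, h₃⟩
  · exact not_disjoint_geodesic_of_lt h₁ h₂ h₃
  · rw [disjoint_comm, geodesic_comm a c]; exact not_disjoint_geodesic_of_lt h₁ h₂ h₃
  · rw [geodesic_comm a c, geodesic_comm b d]; exact not_disjoint_geodesic_of_lt h₁ h₂ h₃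
  · rw [disjoint_comm, geodesic_comm b d]; exact not_disjoint_geodesic_of_lt h₁ h₂ h₃

theorem shortTransversal (h : CyclicallySorted a b c d) :
    ShortTransversal (arcCcw a b) (arcCcw c d) ∨ ShortTransversal (arcCcw b c) (arcCcw d a) := by
  rcases h with ⟨h₁, h₂, h₃⟩ | ⟨h₁, h₂, h₃⟩ | ⟨h₁, h₂, h₃⟩ | ⟨h₁, h₂, h₃⟩
  · exact shortTransversal_of_lt h₁ h₂ h₃
  · exact (shortTransversal_of_lt h₁ h₂ h₃).symm.imp ShortTransversal.symm id
  · exact (shortTransversal_of_lt h₁ h₂ h₃).imp ShortTransversal.symm ShortTransversal.symm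
  · exact (shortTransversal_of_lt h₁ h₂ h₃).symm.imp id ShortTransversal.symm

/-- In the cyclic order `a, b, d, c`, the arcs avoiding the other two points are the arcs between
consecutive points. -/
theorem shortTransversal_of_isArcAvoiding (h : CyclicallySorted a b d c)
    {Iab Icd Iac Ibd : Set (OnePoint ℝ)} (hIab : IsArcAvoiding a b c d Iab)
    (hIcd : IsArcAvoiding c d a b Icd) (hIac : IsArcAvoiding a c b d Iac)
    (hIbd : IsArcAvoiding b d a c Ibd) :
    ShortTransversal Iab Icd ∨ ShortTransversal Iac Ibd := by
  have hab := eq_arcCcw_of_mem_arcCcw hIab.1 hIab.2.2 h.rotate.mem_arcCcw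
  have hdc := eq_arcCcw_of_mem_arcCcw hIcd.1.symm hIcd.2.1 h.rotate.rotate.rotate.mem_arcCcw
  have hca := eq_arcCcw_of_mem_arcCcw hIac.1.symm hIac.2.1 h.mem_arcCcw
  have hbd := eq_arcCcw_of_mem_arcCcw hIbd.1 hIbd.2.2 h.rotate.rotate.mem_arcCcw
  subst hab hdc hca hbd
  exact h.shortTransversal.imp id ShortTransversal.symm

end CyclicallySorted

theorem shortTransversal_of_isArcAvoiding {a b c d : OnePoint ℝ} (hab : a ≠ b) (hac : a ≠ c)
    (had : a ≠ d) (hbc : b ≠ c) (hbd : b ≠ d) (hcd : c ≠ d)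
    (hD₁ : Disjoint (geodesic a b) (geodesic c d)) (hD₂ : Disjoint (geodesic a c) (geodesic b d))
    {Iab Icd Iac Ibd : Set (OnePoint ℝ)} (hIab : IsArcAvoiding a b c d Iab)
    (hIcd : IsArcAvoiding c d a b Icd) (hIac : IsArcAvoiding a c b d Iac)
    (hIbd : IsArcAvoiding b d a c Ibd) :
    ShortTransversal Iab Icd ∨ ShortTransversal Iac Ibd := by
  rcases cyclicallySorted_cases hab hac had hbc hbd hcd with h | h | h | h | h | h
  · exact absurd hD₂ h.not_disjoint_geodesic
  · exact h.shortTransversal_of_isArcAvoiding hIab hIcd hIac hIbd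
  · exact absurd hD₁ h.not_disjoint_geodesic
  · exact (h.shortTransversal_of_isArcAvoiding hIac hIbd hIab hIcd).symm
  · exact absurd hD₁ (geodesic_comm c d ▸ h.not_disjoint_geodesic)
  · exact absurd hD₂ (geodesic_comm b d ▸ h.not_disjoint_geodesic)

/-- For two bounded measured geodesic laminations `λ₊, λ₋` on ℍ²
there is a constant `C > 0` such that for any pairwise distinct ideal points
`a,b,c,d` with `g(a,b)` disjoint from `g(c,d)` and `g(a,c)` disjoint from `g(b,d)`,
`min (λ₊(I_ab × I_cd) + λ₋(I_ab × I_cd), λ₊(I_ac × I_bd) + λ₋(I_ac × I_bd)) ≤ C`,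
where `I_xy` is the closed arc from `x` to `y` avoiding the other two points. -/
theorem bounded_laminations_min_mass_le
    (lamP lamM : MeasuredLamination) (hP : lamP.Bounded) (hM : lamM.Bounded) :
    ∃ C : ℝ, 0 < C ∧
      ∀ a b c d : OnePoint ℝ,
        a ≠ b → a ≠ c → a ≠ d → b ≠ c → b ≠ d → c ≠ d →
        Disjoint (geodesic a b) (geodesic c d) →
        Disjoint (geodesic a c) (geodesic b d) →
        ∀ Iab Icd Iac Ibd : Set (OnePoint ℝ),
          IsArcAvoiding a b c d Iab → IsArcAvoiding c d a b Icd →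
          IsArcAvoiding a c b d Iac → IsArcAvoiding b d a c Ibd →
          min (lamP.μ (Iab ×ˢ Icd) + lamM.μ (Iab ×ˢ Icd))
              (lamP.μ (Iac ×ˢ Ibd) + lamM.μ (Iac ×ˢ Ibd)) ≤ ENNReal.ofReal C := by
  obtain ⟨CP, hCP, hBP⟩ := hP
  obtain ⟨CM, hCM, hBM⟩ := hM
  have hmass : ∀ {S T}, ShortTransversal S T →
      lamP.μ (S ×ˢ T) + lamM.μ (S ×ˢ T) ≤ ENNReal.ofReal (16 * (CP + CM)) := fun hST => by
    rw [ENNReal.ofReal_mul (by norm_num), ENNReal.ofReal_add hCP.le hCM.le, mul_add]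
    exact add_le_add (by simpa using hST.measure_prod_le lamP hBP)
      (by simpa using hST.measure_prod_le lamM hBM)
  refine ⟨16 * (CP + CM), by positivity, fun a b c d hab hac had hbc hbd hcd hD₁ hD₂
    Iab Icd Iac Ibd hIab hIcd hIac hIbd => ?_⟩
  rcases shortTransversal_of_isArcAvoiding hab hac had hbc hbd hcd hD₁ hD₂ hIab hIcd hIac hIbd
    with h | h
  · exact (min_le_left _ _).trans (hmass h)
  · exact (min_le_right _ _).trans (hmass h)
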